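/- arXiv:2304.11456 — 7 statements merged into one kernel-verified Lean document; each statement's English description precedes it below -/
import Mathlib

section
/- For every x ∈ ℝ^d, the subdifferential of g_K at x equals the convex hull of the optimality class of x: ∂g_K(x) = conv(opt_K(x)). -/
/-!
`g_K` is the supremum over `y ∈ K` of the affine functions `⟪·, y⟫ - ‖y‖² / 2`, attained exactly
at the nearest points `y ∈ opt_K(x)`; hence every nearest point is a subgradient at `x`, and so is
every convex combination of them. Conversely, `conv(opt_K(x))` is compact (Carathéodory), so by
separation it suffices that for each direction `v` some `y ∈ opt_K(x)` has `⟪ξ, v⟫ ≤ ⟪y, v⟫`.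
Nearest points to `x + t • v` are subgradients there, so monotonicity of the subdifferential gives
this inequality for them, and as `t → 0⁺` they accumulate on `opt_K(x)`.
-/

open scoped RealInnerProductSpace

noncomputable section

/-- The optimality class of `x` w.r.t. `K`: the points of `K` at minimal distance from `x`. -/
def optClass {d : ℕ} (K : Set (EuclideanSpace ℝ (Fin d))) (x : EuclideanSpace ℝ (Fin d)) :
    Set (EuclideanSpace ℝ (Fin d)) :=
  {y ∈ K | dist x y = Metric.infDist x K}

/-- The subdifferential of a convex function `g : ℝ^d → ℝ` at `x`. -/
def subdiff {d : ℕ} (g : EuclideanSpace ℝ (Fin d) → ℝ) (x : EuclideanSpace ℝ (Fin d)) :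
    Set (EuclideanSpace ℝ (Fin d)) :=
  {ξ | ∀ y, g x + ⟪ξ, y - x⟫ ≤ g y}

open Metric Set Filter Topology

section InnerProductSpace

variable {E : Type*} [NormedAddCommGroup E] [InnerProductSpace ℝ E]

theorem neg_dist_sq_div_two_add_norm_sq_div_two (z y : E) :
    -(dist z y ^ 2) / 2 + ‖z‖ ^ 2 / 2 = ⟪z, y⟫ - ‖y‖ ^ 2 / 2 := by
  rw [dist_eq_norm, norm_sub_sq_real]
  ring

theorem mem_of_forall_exists_inner_le [CompleteSpace E] {C : Set E} (hconv : Convex ℝ C)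
    (hclosed : IsClosed C) {ξ : E} (h : ∀ v, ∃ y ∈ C, ⟪ξ, v⟫ ≤ ⟪y, v⟫) : ξ ∈ C := by
  by_contra hξ
  obtain ⟨f, u, hfC, hfξ⟩ := geometric_hahn_banach_closed_point hconv hclosed hξ
  obtain ⟨y, hyC, hy⟩ := h ((InnerProductSpace.toDual ℝ E).symm f)
  rw [real_inner_comm _ ξ, real_inner_comm _ y, InnerProductSpace.toDual_symm_apply,
    InnerProductSpace.toDual_symm_apply] at hy
  linarith [hfC y hyC]

end InnerProductSpace

section Caratheodory

variable {E : Type*} [NormedAddCommGroup E] [NormedSpace ℝ E]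

def convexCombinations (s : Set E) (k : ℕ) : Set E :=
  (fun p : (Fin k → ℝ) × (Fin k → E) => ∑ i, p.1 i • p.2 i) ''
    (stdSimplex ℝ (Fin k) ×ˢ univ.pi fun _ => s)

theorem IsCompact.convexCombinations {s : Set E} (hs : IsCompact s) (k : ℕ) :
    IsCompact (convexCombinations s k) :=
  ((isCompact_stdSimplex ℝ (Fin k)).prod (isCompact_univ_pi fun _ => hs)).image <| by fun_prop

theorem convexCombinations_subset_convexHull (s : Set E) (k : ℕ) :
    convexCombinations s k ⊆ convexHull ℝ s := by
  rintro _ ⟨⟨w, z⟩, ⟨⟨hw₀, hw₁⟩, hz⟩, rfl⟩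
  exact (convex_convexHull ℝ s).sum_mem (fun i _ => hw₀ i) hw₁
    fun i _ => subset_convexHull ℝ s (hz i (mem_univ i))

theorem convexHull_eq_biUnion_convexCombinations [FiniteDimensional ℝ E] (s : Set E) :
    convexHull ℝ s =
      ⋃ k ∈ Finset.range (Module.finrank ℝ E + 2), convexCombinations s k := by
  refine Subset.antisymm (fun x hx => ?_)
    (iUnion₂_subset fun k _ => convexCombinations_subset_convexHull s k)
  obtain ⟨ι, _, z, w, hzs, hz, hw₀, hw₁, rfl⟩ := eq_pos_convex_span_of_mem_convexHull hx
  have hcard : Fintype.card ι < Module.finrank ℝ E + 2 :=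
    (hz.card_le_finrank_succ.trans (Nat.succ_le_succ (Submodule.finrank_le _))).trans_lt
      (Nat.lt_succ_self _)
  let e := Fintype.equivFin ι
  refine mem_biUnion (Finset.mem_coe.2 (Finset.mem_range.2 hcard))
    ⟨(w ∘ e.symm, z ∘ e.symm), ⟨⟨fun i => (hw₀ _).le, ?_⟩, fun i _ => hzs ⟨_, rfl⟩⟩, ?_⟩
  · simpa [← hw₁] using e.symm.sum_comp w
  · exact e.symm.sum_comp fun i => w i • z i

theorem IsCompact.convexHull [FiniteDimensional ℝ E] {s : Set E} (hs : IsCompact s) :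
    IsCompact (convexHull ℝ s) := by
  rw [convexHull_eq_biUnion_convexCombinations]
  exact Finset.isCompact_biUnion _ fun k _ => hs.convexCombinations k

end Caratheodory

section Euclidean

variable {d : ℕ} {K : Set (EuclideanSpace ℝ (Fin d))}

def gK (K : Set (EuclideanSpace ℝ (Fin d))) (y : EuclideanSpace ℝ (Fin d)) : ℝ :=
  -(infDist y K ^ 2) / 2 + ‖y‖ ^ 2 / 2

theorem inner_sub_norm_sq_div_two_le_gK {y : EuclideanSpace ℝ (Fin d)} (hy : y ∈ K)
    (z : EuclideanSpace ℝ (Fin d)) : ⟪z, y⟫ - ‖y‖ ^ 2 / 2 ≤ gK K z := by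
  have hdist : infDist z K ^ 2 ≤ dist z y ^ 2 := by
    gcongr
    exacts [infDist_nonneg, infDist_le_dist_of_mem hy]
  rw [gK, ← neg_dist_sq_div_two_add_norm_sq_div_two]
  linarith

theorem gK_eq_of_mem_optClass {y z : EuclideanSpace ℝ (Fin d)} (hy : y ∈ optClass K z) :
    gK K z = ⟪z, y⟫ - ‖y‖ ^ 2 / 2 := by
  rw [gK, ← hy.2, neg_dist_sq_div_two_add_norm_sq_div_two]

theorem mem_subdiff_of_mem_optClass {y z : EuclideanSpace ℝ (Fin d)} (hy : y ∈ optClass K z) :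
    y ∈ subdiff (gK K) z := fun w => by
  have := inner_sub_norm_sq_div_two_le_gK hy.1 w
  rw [gK_eq_of_mem_optClass hy, inner_sub_right, real_inner_comm z, real_inner_comm w]
  linarith

theorem convex_subdiff (g : EuclideanSpace ℝ (Fin d) → ℝ) (x : EuclideanSpace ℝ (Fin d)) :
    Convex ℝ (subdiff g x) := by
  intro ξ hξ η hη a b ha hb hab y
  rw [inner_add_left, real_inner_smul_left, real_inner_smul_left]
  have := hξ y
  have := hη y
  calc g x + (a * ⟪ξ, y - x⟫ + b * ⟪η, y - x⟫)
      = a * (g x + ⟪ξ, y - x⟫) + b * (g x + ⟪η, y - x⟫) := by linear_combination (-g x) * hab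
    _ ≤ a * g y + b * g y := by gcongr
    _ = g y := by linear_combination g y * hab

theorem inner_sub_sub_nonneg_of_mem_subdiff {g : EuclideanSpace ℝ (Fin d) → ℝ}
    {x z ξ η : EuclideanSpace ℝ (Fin d)} (hξ : ξ ∈ subdiff g x) (hη : η ∈ subdiff g z) :
    0 ≤ ⟪η - ξ, z - x⟫ := by
  have h₁ := hξ z
  have h₂ := hη x
  rw [← neg_sub z x, inner_neg_right] at h₂
  rw [inner_sub_left]
  linarith

theorem optClass_nonempty (hKne : K.Nonempty) (hKcl : IsClosed K) (x : EuclideanSpace ℝ (Fin d)) :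
    (optClass K x).Nonempty := by
  obtain ⟨y, hyK, hy⟩ := hKcl.exists_infDist_eq_dist hKne x
  exact ⟨y, hyK, hy.symm⟩

theorem isCompact_optClass (hKcl : IsClosed K) (x : EuclideanSpace ℝ (Fin d)) :
    IsCompact (optClass K x) := by
  have : optClass K x = K ∩ sphere x (infDist x K) := by
    ext y
    simp only [optClass, mem_ofPred_eq, mem_inter_iff, mem_sphere, dist_comm y]
  rw [this]
  exact (isCompact_sphere x _).inter_left hKcl

theorem exists_mem_optClass_tendsto_subseq (hKcl : IsClosed K)
    {x : EuclideanSpace ℝ (Fin d)} {z y : ℕ → EuclideanSpace ℝ (Fin d)}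
    (hz : Tendsto z atTop (𝓝 x)) (hy : ∀ n, y n ∈ optClass K (z n)) :
    ∃ y₀ ∈ optClass K x, ∃ φ : ℕ → ℕ, StrictMono φ ∧ Tendsto (y ∘ φ) atTop (𝓝 y₀) := by
  have hinfDist : Tendsto (fun n => infDist (z n) K) atTop (𝓝 (infDist x K)) :=
    ((continuous_infDist_pt K).tendsto x).comp hz
  obtain ⟨C, hC⟩ := (hinfDist.add (hz.dist tendsto_const_nhds)).bddAbove_range
  have hbound : ∀ n, y n ∈ closedBall x C := fun n => by
    rw [mem_closedBall]
    calc dist (y n) x ≤ dist (z n) (y n) + dist (z n) x := dist_triangle_left _ _ _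
      _ = infDist (z n) K + dist (z n) x := by rw [(hy n).2]
      _ ≤ C := hC ⟨n, rfl⟩
  obtain ⟨y₀, -, φ, hφ, hyφ⟩ := tendsto_subseq_of_bounded isBounded_closedBall hbound
  have hzφ := hz.comp hφ.tendsto_atTop
  refine ⟨y₀, ⟨hKcl.mem_of_tendsto hyφ (.of_forall fun n => (hy (φ n)).1), ?_⟩, φ, hφ, hyφ⟩
  refine tendsto_nhds_unique (hzφ.dist hyφ) ?_
  simpa only [Function.comp_def, (hy _).2] using hinfDist.comp hφ.tendsto_atTop

theorem exists_mem_optClass_inner_le (hKne : K.Nonempty) (hKcl : IsClosed K)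
    {x ξ : EuclideanSpace ℝ (Fin d)} (hξ : ξ ∈ subdiff (gK K) x) (v : EuclideanSpace ℝ (Fin d)) :
    ∃ y ∈ optClass K x, ⟪ξ, v⟫ ≤ ⟪y, v⟫ := by
  set t : ℕ → ℝ := fun n => 1 / (n + 1)
  choose y hy using fun n => optClass_nonempty hKne hKcl (x + t n • v)
  have hz : Tendsto (fun n => x + t n • v) atTop (𝓝 x) := by
    have := (tendsto_const_nhds (x := x)).add
      ((tendsto_one_div_add_atTop_nhds_zero_nat (𝕜 := ℝ)).smul_const v)
    rwa [zero_smul, add_zero] at this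
  have hle : ∀ n, ⟪ξ, v⟫ ≤ ⟪y n, v⟫ := fun n => by
    have := inner_sub_sub_nonneg_of_mem_subdiff hξ (mem_subdiff_of_mem_optClass (hy n))
    rw [add_sub_cancel_left, real_inner_smul_right, inner_sub_left] at this
    nlinarith [show 0 < t n by positivity]
  obtain ⟨y₀, hy₀, φ, -, hyφ⟩ := exists_mem_optClass_tendsto_subseq hKcl hz hy
  exact ⟨y₀, hy₀, ge_of_tendsto (hyφ.inner tendsto_const_nhds) (.of_forall fun n => hle (φ n))⟩

end Euclidean

/-- The convex function `g_K(x) = -dist_K(x)²/2 + ‖x‖²/2` has subdifferential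
`∂g_K(x) = conv(opt_K(x))`. -/
theorem subdiff_gK_eq {d : ℕ} (K : Set (EuclideanSpace ℝ (Fin d))) (hKne : K.Nonempty)
    (hKcl : IsClosed K) (x : EuclideanSpace ℝ (Fin d)) :
    subdiff (fun y => -(Metric.infDist y K ^ 2) / 2 + ‖y‖ ^ 2 / 2) x =
      convexHull ℝ (optClass K x) := by
  change subdiff (gK K) x = _
  refine Subset.antisymm (fun ξ hξ => ?_)
    (convexHull_min (fun y hy => mem_subdiff_of_mem_optClass hy) (convex_subdiff _ x))
  refine mem_of_forall_exists_inner_le (convex_convexHull ℝ _)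
    (isCompact_optClass hKcl x).convexHull.isClosed fun v => ?_
  obtain ⟨y, hy, hξy⟩ := exists_mem_optClass_inner_le hKne hKcl hξ v
  exact ⟨y, subset_convexHull ℝ _ hy, hξy⟩
end
end

section
/- The point η_K(x) depends only on the optimality class of x: if x, y ∈ ℝ^d satisfy opt_K(x) = opt_K(y), then η_K(x) = η_K(y). -/
/-!
The map `z ↦ ‖x - z‖² - ‖y - z‖²` is affine, and it is constant (equal to
`dist_K(x)² - dist_K(y)²`) on `opt_K(x) = opt_K(y)`, hence on the convex hull of that set.
So a point of the hull nearest to `y` is also nearest to `x`, and nearest points in a convex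
set are unique because Euclidean space is strictly convex.
-/

noncomputable section

/-- `e` is the nearest point to `x` in the convex hull of the optimality class of `x`. -/
def IsNearestInOptHull {d : ℕ} (K : Set (EuclideanSpace ℝ (Fin d)))
    (x e : EuclideanSpace ℝ (Fin d)) : Prop :=
  e ∈ convexHull ℝ (optClass K x) ∧ ∀ z ∈ convexHull ℝ (optClass K x), dist x e ≤ dist x z

open scoped RealInnerProductSpace

theorem Convex.eq_of_isMinOn_dist {E : Type*} [NormedAddCommGroup E] [NormedSpace ℝ E]
    [StrictConvexSpace ℝ E] {C : Set E} (hC : Convex ℝ C) {x e e' : E} (he : e ∈ C)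
    (he' : e' ∈ C) (hmin : IsMinOn (dist x) C e) (hmin' : IsMinOn (dist x) C e') : e = e' := by
  by_contra hne
  have hr : dist x e' = dist x e :=
    le_antisymm (isMinOn_iff.1 hmin' e he) (isMinOn_iff.1 hmin e' he')
  have hmid : (1 / 2 : ℝ) • e + (1 / 2 : ℝ) • e' ∈ Metric.ball x (dist x e) :=
    combo_mem_ball_of_ne (Metric.mem_closedBall'.2 le_rfl) (Metric.mem_closedBall'.2 hr.le) hne
      (by norm_num) (by norm_num) (by norm_num)
  exact (isMinOn_iff.1 hmin _ (hC he he' (by norm_num) (by norm_num) (by norm_num))).not_gt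
    (Metric.mem_ball'.1 hmid)

section InnerProductSpace

variable {F : Type*} [NormedAddCommGroup F] [InnerProductSpace ℝ F]

theorem dist_sq_sub_dist_sq (x y z : F) :
    dist x z ^ 2 - dist y z ^ 2 = ‖x‖ ^ 2 - ‖y‖ ^ 2 - 2 * ⟪x - y, z⟫ := by
  rw [dist_eq_norm, dist_eq_norm, norm_sub_sq_real, norm_sub_sq_real, inner_sub_left]
  ring

theorem convex_setOf_dist_sq_sub_dist_sq_eq (x y : F) (c : ℝ) :
    Convex ℝ {z | dist x z ^ 2 - dist y z ^ 2 = c} := by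
  have hset : {z | dist x z ^ 2 - dist y z ^ 2 = c} =
      {z | innerₛₗ ℝ (x - y) z = (‖x‖ ^ 2 - ‖y‖ ^ 2 - c) / 2} := by
    ext z
    simp only [Set.mem_ofPred_eq, dist_sq_sub_dist_sq, innerₛₗ_apply_apply]
    constructor <;> intro h <;> linarith
  rw [hset]
  exact convex_hyperplane (innerₛₗ ℝ (x - y)).isLinear _

theorem dist_sq_sub_dist_sq_eq_on_convexHull {S : Set F} {x y : F} {c : ℝ}
    (h : ∀ s ∈ S, dist x s ^ 2 - dist y s ^ 2 = c) :
    ∀ z ∈ convexHull ℝ S, dist x z ^ 2 - dist y z ^ 2 = c :=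
  convexHull_min h (convex_setOf_dist_sq_sub_dist_sq_eq x y c)

end InnerProductSpace

theorem IsMinOn.dist_of_dist_sq_sub_dist_sq_eq {X : Type*} [PseudoMetricSpace X] {C : Set X}
    {x y e : X} {c : ℝ} (hc : ∀ z ∈ C, dist x z ^ 2 - dist y z ^ 2 = c) (he : e ∈ C)
    (hmin : IsMinOn (dist y) C e) : IsMinOn (dist x) C e := by
  refine isMinOn_iff.2 fun z hz ↦ ?_
  have hsq : dist x e ^ 2 ≤ dist x z ^ 2 := by
    have := pow_le_pow_left₀ dist_nonneg (isMinOn_iff.1 hmin z hz) 2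
    linarith [hc z hz, hc e he]
  exact (pow_le_pow_iff_left₀ dist_nonneg dist_nonneg two_ne_zero).1 hsq

theorem etaK_depends_only_on_optClass_general {d : ℕ} (K : Set (EuclideanSpace ℝ (Fin d)))
    (x y ηx ηy : EuclideanSpace ℝ (Fin d))
    (hopt : optClass K x = optClass K y)
    (hx : IsNearestInOptHull K x ηx) (hy : IsNearestInOptHull K y ηy) :
    ηx = ηy := by
  obtain ⟨hηx, hxmin⟩ := hx
  obtain ⟨hηy, hymin⟩ := hy
  rw [← hopt] at hηy hymin
  have hconst : ∀ z ∈ convexHull ℝ (optClass K x),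
      dist x z ^ 2 - dist y z ^ 2 = Metric.infDist x K ^ 2 - Metric.infDist y K ^ 2 :=
    dist_sq_sub_dist_sq_eq_on_convexHull fun s hs ↦ by
      rw [hs.2, (hopt ▸ hs : s ∈ optClass K y).2]
  exact (convex_convexHull ℝ _).eq_of_isMinOn_dist hηx hηy (isMinOn_iff.2 hxmin)
    ((isMinOn_iff.2 hymin).dist_of_dist_sq_sub_dist_sq_eq hconst hηy)

/-- The point `η_K(x)` depends only on the optimality class of `x`. -/
theorem etaK_depends_only_on_optClass {d : ℕ} (K : Set (EuclideanSpace ℝ (Fin d)))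
    (hKne : K.Nonempty) (hKcl : IsClosed K) (x y ηx ηy : EuclideanSpace ℝ (Fin d))
    (hopt : optClass K x = optClass K y)
    (hx : IsNearestInOptHull K x ηx) (hy : IsNearestInOptHull K y ηy) :
    ηx = ηy :=
  etaK_depends_only_on_optClass_general K x y ηx ηy hopt hx hy
end
end

section
/- Let H ⊆ K be such that the Voronoi cell V_H is nonempty. Then: V_H is a convex set; the direction (linear part) of the affine span A_H of H and the direction of the affine subspace B_H = {x ∈ ℝ^d : |x − p| = |x − q| for all p, q ∈ H} are orthogonal complements of each other in ℝ^d; A_H ∩ B_H consists of exactly one point p_H; and V_H is open in the subspace topology of B_H. -/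
noncomputable section

/-- The Voronoi cell of the optimality class `H ⊆ K`. -/
def voronoiCell {d : ℕ} (K H : Set (EuclideanSpace ℝ (Fin d))) :
    Set (EuclideanSpace ℝ (Fin d)) :=
  {x | optClass K x = H}

/-- The set `B_H` of points equidistant from all points of `H`. -/
def bisectorSet {d : ℕ} (H : Set (EuclideanSpace ℝ (Fin d))) :
    Set (EuclideanSpace ℝ (Fin d)) :=
  {x | ∀ p ∈ H, ∀ q ∈ H, dist x p = dist x q}

/-!
Fix `p₀ ∈ H`. A point lies in `V_H` iff it is equidistant from all points of `H` and strictly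
closer to `p₀` than to every point of `K \ H`. Through any `x₀ ∈ V_H` the first condition cuts
out the affine subspace `B_H = x₀ + (vectorSpan H)ᗮ`, the second a finite intersection of open
half-spaces; this gives convexity and relative openness, and `A_H ∩ B_H` is the orthogonal
projection of `x₀` onto `A_H`.
-/

open Metric AffineSubspace EuclideanGeometry
open scoped RealInnerProductSpace

section EuclideanAffine

variable {V P : Type*} [NormedAddCommGroup V] [InnerProductSpace ℝ V] [MetricSpace P]
  [NormedAddTorsor V P]

theorem mem_orthogonal_vectorSpan_iff {s : Set P} {v : V} :
    v ∈ (vectorSpan ℝ s)ᗮ ↔ ∀ p ∈ s, ∀ q ∈ s, ⟪v, p -ᵥ q⟫ = 0 := by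
  rw [vectorSpan_def, ← Submodule.span_singleton_le_iff_mem, ← Submodule.isOrtho_iff_le,
    Submodule.isOrtho_span]
  simp only [Set.mem_singleton_iff, forall_eq]
  exact Set.forall_mem_image2

/-- `dist x p = dist x q` says that `x` lies on `perpBisector q p`, whose direction is
`(ℝ ∙ (p -ᵥ q))ᗮ`. -/
theorem setOf_forall_dist_eq_eq_mk' {s : Set P} {x₀ : P}
    (hx₀ : ∀ p ∈ s, ∀ q ∈ s, dist x₀ p = dist x₀ q) :
    {x | ∀ p ∈ s, ∀ q ∈ s, dist x p = dist x q} = (mk' x₀ (vectorSpan ℝ s)ᗮ : Set P) := by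
  ext x
  simp only [Set.mem_ofPred_eq, SetLike.mem_coe, mem_mk', mem_orthogonal_vectorSpan_iff]
  refine forall₂_congr fun p hp => forall₂_congr fun q hq => ?_
  have hx₀qp : x₀ ∈ perpBisector q p := mem_perpBisector_iff_dist_eq.2 (hx₀ q hq p hp)
  rw [← Submodule.mem_orthogonal_singleton_iff_inner_left, ← direction_perpBisector,
    vsub_right_mem_direction_iff_mem hx₀qp, mem_perpBisector_iff_dist_eq, eq_comm]

theorem existsUnique_mem_affineSpan_mem_mk'_orthogonal [FiniteDimensional ℝ V] {s : Set P}
    (hs : s.Nonempty) (x : P) :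
    ∃! p, p ∈ affineSpan ℝ s ∧ p ∈ mk' x (vectorSpan ℝ s)ᗮ := by
  have : Nonempty (affineSpan ℝ s) := ⟨⟨hs.some, mem_affineSpan ℝ hs.some_mem⟩⟩
  have h := inter_eq_singleton_orthogonalProjection (s := affineSpan ℝ s) x
  rw [← direction_affineSpan]
  exact ⟨_, (Set.ext_iff.1 h _).2 rfl, fun p hp => (Set.ext_iff.1 h p).1 hp⟩

end EuclideanAffine

theorem convex_setOf_dist_lt {V : Type*} [NormedAddCommGroup V] [InnerProductSpace ℝ V]
    (p q : V) : Convex ℝ {x : V | dist x p < dist x q} := by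
  have hhalf : {x : V | dist x p < dist x q} = {x | ⟪q - p, x⟫ < (‖q‖ ^ 2 - ‖p‖ ^ 2) / 2} := by
    ext x
    rw [Set.mem_ofPred_eq, Set.mem_ofPred_eq, dist_eq_norm, dist_eq_norm,
      ← sq_lt_sq₀ (norm_nonneg _) (norm_nonneg _), norm_sub_sq_real, norm_sub_sq_real,
      inner_sub_left, real_inner_comm x p, real_inner_comm x q]
    constructor <;> intro <;> linarith
  rw [hhalf]
  exact convex_halfSpace_lt (innerₛₗ ℝ (q - p)).isLinear _

section Voronoi

variable {d : ℕ}

local notation "E" => EuclideanSpace ℝ (Fin d)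

theorem optClass_nonempty_s5 {K : Set E} (hK : IsCompact K) (hK' : K.Nonempty) (x : E) :
    (optClass K x).Nonempty := by
  obtain ⟨y, hy, hxy⟩ := hK.exists_infDist_eq_dist hK' x
  exact ⟨y, hy, hxy.symm⟩

theorem voronoiCell_eq_inter {K H : Set E} {p₀ : E} (hHK : H ⊆ K) (hp₀ : p₀ ∈ H) :
    voronoiCell K H = bisectorSet H ∩ ⋂ q ∈ K \ H, {x | dist x p₀ < dist x q} := by
  ext x
  simp only [Set.mem_inter_iff, Set.mem_iInter, Set.mem_sdiff, and_imp, Set.mem_ofPred_eq]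
  constructor
  · rintro (hx : optClass K x = H)
    have hopt : ∀ y, y ∈ H ↔ y ∈ K ∧ dist x y = infDist x K := fun y => by rw [← hx]; rfl
    refine ⟨fun p hp q hq => ((hopt p).1 hp).2.trans ((hopt q).1 hq).2.symm,
      fun q hqK hqH => ?_⟩
    rw [((hopt p₀).1 hp₀).2]
    exact (infDist_le_dist_of_mem hqK).lt_of_ne fun h => hqH ((hopt q).2 ⟨hqK, h.symm⟩)
  · rintro ⟨hbis, hlt⟩
    have hle : ∀ q ∈ K, dist x p₀ ≤ dist x q := fun q hq => by
      by_cases hqH : q ∈ H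
      · exact (hbis p₀ hp₀ q hqH).le
      · exact (hlt q hq hqH).le
    have hinf : infDist x K = dist x p₀ :=
      le_antisymm (infDist_le_dist_of_mem (hHK hp₀)) ((le_infDist ⟨p₀, hHK hp₀⟩).2 hle)
    show optClass K x = H
    ext y
    simp only [optClass, Set.mem_ofPred_eq, hinf]
    refine ⟨fun ⟨hyK, hy⟩ => ?_, fun hy => ⟨hHK hy, hbis y hy p₀ hp₀⟩⟩
    by_contra hyH
    exact (hlt y hyK hyH).ne' hy

end Voronoi

theorem voronoi_partition_properties_general {d : ℕ}
    (K : Set (EuclideanSpace ℝ (Fin d))) (hKfin : K.Finite) (hKne : K.Nonempty)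
    (H : Set (EuclideanSpace ℝ (Fin d))) (hHK : H ⊆ K)
    (hne : (voronoiCell K H).Nonempty) :
    Convex ℝ (voronoiCell K H) ∧
      (∃ B : AffineSubspace ℝ (EuclideanSpace ℝ (Fin d)),
        (B : Set (EuclideanSpace ℝ (Fin d))) = bisectorSet H ∧
        B.direction = (vectorSpan ℝ H)ᗮ ∧
        vectorSpan ℝ H = B.directionᗮ ∧
        (affineSpan ℝ H).direction = B.directionᗮ) ∧
      (∃! p : EuclideanSpace ℝ (Fin d), p ∈ affineSpan ℝ H ∧ p ∈ bisectorSet H) ∧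
      IsOpen {y : bisectorSet H | (y : EuclideanSpace ℝ (Fin d)) ∈ voronoiCell K H} := by
  obtain ⟨x₀, hx₀⟩ := hne
  obtain ⟨p₀, hp₀⟩ : H.Nonempty := hx₀ ▸ optClass_nonempty_s5 hKfin.isCompact hKne x₀
  have hV := voronoiCell_eq_inter hHK hp₀
  have hB : bisectorSet H = mk' x₀ (vectorSpan ℝ H)ᗮ :=
    setOf_forall_dist_eq_eq_mk' (hV ▸ hx₀).1
  have hcloser : IsOpen (⋂ q ∈ K \ H, {x | dist x p₀ < dist x q}) :=
    hKfin.sdiff.isOpen_biInter fun q _ =>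
      isOpen_lt (continuous_id.dist continuous_const) (continuous_id.dist continuous_const)
  refine ⟨?_, ⟨mk' x₀ (vectorSpan ℝ H)ᗮ, hB.symm, direction_mk' _ _, ?_, ?_⟩, ?_, ?_⟩
  · rw [hV, hB]
    exact (AffineSubspace.convex _).inter (convex_iInter₂ fun q _ => convex_setOf_dist_lt p₀ q)
  · rw [direction_mk', Submodule.orthogonal_orthogonal]
  · rw [direction_affineSpan, direction_mk', Submodule.orthogonal_orthogonal]
  · rw [hB]
    exact existsUnique_mem_affineSpan_mem_mk'_orthogonal ⟨p₀, hp₀⟩ x₀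
  · rw [hV]
    simp only [Set.mem_inter_iff, Subtype.coe_prop, true_and]
    exact hcloser.preimage continuous_subtype_val

/-- Properties of the Voronoi partition: if `V_H ≠ ∅` then `V_H` is convex; `B_H` is an affine
subspace whose direction is the orthogonal complement of the direction of the affine span `A_H`
of `H` (and vice versa); `A_H ∩ B_H` consists of exactly one point `p_H`; and `V_H` is open in
the subspace topology of `B_H`. -/
theorem voronoi_partition_properties {d : ℕ} (hd : 1 ≤ d)
    (K : Set (EuclideanSpace ℝ (Fin d))) (hKfin : K.Finite) (hKne : K.Nonempty)
    (H : Set (EuclideanSpace ℝ (Fin d))) (hHK : H ⊆ K)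
    (hne : (voronoiCell K H).Nonempty) :
    Convex ℝ (voronoiCell K H) ∧
      (∃ B : AffineSubspace ℝ (EuclideanSpace ℝ (Fin d)),
        (B : Set (EuclideanSpace ℝ (Fin d))) = bisectorSet H ∧
        B.direction = (vectorSpan ℝ H)ᗮ ∧
        vectorSpan ℝ H = B.directionᗮ ∧
        (affineSpan ℝ H).direction = B.directionᗮ) ∧
      (∃! p : EuclideanSpace ℝ (Fin d), p ∈ affineSpan ℝ H ∧ p ∈ bisectorSet H) ∧
      IsOpen {y : bisectorSet H | (y : EuclideanSpace ℝ (Fin d)) ∈ voronoiCell K H} :=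
  voronoi_partition_properties_general K hKfin hKne H hHK hne
end
end

section
/- Let β := min { |η − η̄|² : η, η̄ ∈ 𝓔, η ≠ η̄ } > 0. Then for every pair of distinct η, η̄ ∈ 𝓔 and every x ∈ Q_η ∩ P_η̄ one has |η̄ − x|² ≥ |η − x|² + β. -/
/-!
`η x` is the metric projection of `x` onto the convex set `conv(opt_K(x))`, so the angle at `η x`
between `x` and any other point `e'` of that set is obtuse. Hence
`|e' - x|² ≥ |η x - x|² + |e' - η x|²`, and the last term is at least `β` when `e' ≠ η x` are
both values of `η`.
-/

noncomputable section

/-- `η` is the map assigning to each `x` the nearest point to `x` in `conv(opt_K(x))`. -/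
def IsEtaMap {d : ℕ} (K : Set (EuclideanSpace ℝ (Fin d)))
    (η : EuclideanSpace ℝ (Fin d) → EuclideanSpace ℝ (Fin d)) : Prop :=
  ∀ x, η x ∈ convexHull ℝ (optClass K x) ∧
    ∀ z ∈ convexHull ℝ (optClass K x), dist x (η x) ≤ dist x z

end

open RealInnerProductSpace

section NearestPoint

variable {F : Type*} [NormedAddCommGroup F] [InnerProductSpace ℝ F]

theorem Convex.inner_sub_le_zero_of_forall_dist_le {C : Set F} (hC : Convex ℝ C)
    {x e z : F} (he : e ∈ C) (hz : z ∈ C) (hmin : ∀ w ∈ C, dist x e ≤ dist x w) :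
    ⟪x - e, z - e⟫ ≤ 0 := by
  have : Nonempty C := ⟨⟨e, he⟩⟩
  have hinf : ‖x - e‖ = ⨅ w : C, ‖x - w‖ :=
    le_antisymm (le_ciInf fun w => by simpa only [dist_eq_norm] using hmin w w.2)
      (ciInf_le ⟨0, fun _ ⟨w, hw⟩ => hw ▸ norm_nonneg _⟩ (⟨e, he⟩ : C))
  exact (norm_eq_iInf_iff_real_inner_le_zero hC he).mp hinf z hz

theorem Convex.norm_sub_sq_add_norm_sub_sq_le_of_forall_dist_le {C : Set F} (hC : Convex ℝ C)
    {x e z : F} (he : e ∈ C) (hz : z ∈ C) (hmin : ∀ w ∈ C, dist x e ≤ dist x w) :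
    ‖e - x‖ ^ 2 + ‖z - e‖ ^ 2 ≤ ‖z - x‖ ^ 2 := by
  have hobtuse := hC.inner_sub_le_zero_of_forall_dist_le he hz hmin
  have hexpand : ‖z - x‖ ^ 2 = ‖e - x‖ ^ 2 - 2 * ⟪x - e, z - e⟫ + ‖z - e‖ ^ 2 := by
    rw [show z - x = (z - e) - (x - e) by abel, norm_sub_sq_real, real_inner_comm,
      norm_sub_rev x e]
    ring
  linarith

end NearestPoint

theorem potential_level_separation_general {d : ℕ}
    (K : Set (EuclideanSpace ℝ (Fin d)))
    (η : EuclideanSpace ℝ (Fin d) → EuclideanSpace ℝ (Fin d)) (hη : IsEtaMap K η)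
    (β : ℝ)
    (hβ : IsLeast {b : ℝ | ∃ e ∈ Set.range η, ∃ e' ∈ Set.range η, e ≠ e' ∧ b = ‖e - e'‖ ^ 2} β) :
    0 < β ∧
      ∀ e ∈ Set.range η, ∀ e' ∈ Set.range η, e ≠ e' →
        ∀ x : EuclideanSpace ℝ (Fin d), η x = e → e' ∈ convexHull ℝ (optClass K x) →
          ‖e - x‖ ^ 2 + β ≤ ‖e' - x‖ ^ 2 := by
  constructor
  · obtain ⟨a, -, b, -, hab, rfl⟩ := hβ.1
    exact pow_pos (norm_pos_iff.mpr (sub_ne_zero.mpr hab)) 2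
  · rintro e he e' he' hne x rfl he'C
    have hβle : β ≤ ‖e' - η x‖ ^ 2 := norm_sub_rev (η x) e' ▸ hβ.2 ⟨η x, he, e', he', hne, rfl⟩
    have hpyth := (convex_convexHull ℝ _).norm_sub_sq_add_norm_sub_sq_le_of_forall_dist_le
      (hη x).1 he'C (hη x).2
    linarith

/-- Separation of potential levels: with `β` the least squared distance between distinct values
of `η_K`, one has `β > 0` and `|η̄ - x|² ≥ |η - x|² + β` for all distinct `η, η̄ ∈ 𝓔` and all
`x ∈ Q_η ∩ P_η̄`. -/
theorem potential_level_separation {d : ℕ} (hd : 1 ≤ d)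
    (K : Set (EuclideanSpace ℝ (Fin d))) (hKfin : K.Finite) (hKne : K.Nonempty)
    (η : EuclideanSpace ℝ (Fin d) → EuclideanSpace ℝ (Fin d)) (hη : IsEtaMap K η)
    (β : ℝ)
    (hβ : IsLeast {b : ℝ | ∃ e ∈ Set.range η, ∃ e' ∈ Set.range η, e ≠ e' ∧ b = ‖e - e'‖ ^ 2} β) :
    0 < β ∧
      ∀ e ∈ Set.range η, ∀ e' ∈ Set.range η, e ≠ e' →
        ∀ x : EuclideanSpace ℝ (Fin d), η x = e → e' ∈ convexHull ℝ (optClass K x) →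
          ‖e - x‖ ^ 2 + β ≤ ‖e' - x‖ ^ 2 :=
  potential_level_separation_general K η hη β hβ
end

section
/- For every η ∈ 𝓔, the set P_η = {x ∈ ℝ^d : η ∈ conv(opt_K(x))} is a polyhedron, i.e. a nonempty closed convex set that can be written as a finite intersection of closed half-spaces of ℝ^d. -/
open scoped RealInnerProductSpace

noncomputable section

/-!
Write `e = ∑ wᵢ zᵢ` with `zᵢ ∈ opt_K(x₀)` and all `wᵢ > 0` (Carathéodory). For any convex
combination with barycenter `e`, `∑ wᵢ |x - zᵢ|² - |x - e|²` does not depend on `x`; comparing two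
such combinations at `x₀` and at `x` shows that `e ∈ conv(opt_K(x))` exactly when every `zᵢ` is
optimal at `x`. So `P_e` is the intersection of the Voronoi cells of the `zᵢ`, each cut out by the
finitely many half-spaces `|x - zᵢ| ≤ |x - y|`, `y ∈ K`.
-/

section InnerProductSpace

variable {E : Type*} [NormedAddCommGroup E] [InnerProductSpace ℝ E]

theorem sum_mul_dist_sq_eq {ι : Type*} [Fintype ι] {w : ι → ℝ} {z : ι → E} {e : E}
    (hw₁ : ∑ i, w i = 1) (hwz : ∑ i, w i • z i = e) (x : E) :
    ∑ i, w i * dist x (z i) ^ 2 = dist x e ^ 2 + ∑ i, w i * dist (z i) e ^ 2 := by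
  simp only [dist_eq_norm]
  have hcentred : ∑ i, w i • (z i - e) = 0 := by
    simp only [smul_sub, Finset.sum_sub_distrib, hwz, ← Finset.sum_smul, hw₁, one_smul, sub_self]
  have hcross : ∑ i, w i * ⟪x - e, z i - e⟫ = 0 := by
    simp only [← real_inner_smul_right, ← inner_sum, hcentred, inner_zero_right]
  calc ∑ i, w i * ‖x - z i‖ ^ 2
      = ∑ i, (w i * ‖x - e‖ ^ 2 - 2 * (w i * ⟪x - e, z i - e⟫) + w i * ‖z i - e‖ ^ 2) := by
        refine Finset.sum_congr rfl fun i _ => ?_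
        rw [← sub_sub_sub_cancel_right x (z i) e, norm_sub_sq_real]
        ring
    _ = ‖x - e‖ ^ 2 + ∑ i, w i * ‖z i - e‖ ^ 2 := by
        rw [Finset.sum_add_distrib, Finset.sum_sub_distrib, ← Finset.sum_mul, ← Finset.mul_sum,
          hcross, hw₁]
        ring

theorem dist_le_dist_iff_inner_le (x a b : E) :
    dist x a ≤ dist x b ↔ ⟪(2 : ℝ) • (b - a), x⟫ ≤ ‖b‖ ^ 2 - ‖a‖ ^ 2 := by
  rw [dist_eq_norm, dist_eq_norm, ← sq_le_sq₀ (norm_nonneg _) (norm_nonneg _),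
    norm_sub_sq_real, norm_sub_sq_real, real_inner_smul_left, inner_sub_left,
    real_inner_comm a, real_inner_comm b]
  constructor <;> intro h <;> linarith

theorem exists_fin_iInter_halfSpace {J : Type*} [Finite J] (a : J → E) (b : J → ℝ)
    (ha : ∀ j, a j ≠ 0) :
    ∃ (n : ℕ) (a' : Fin n → E) (b' : Fin n → ℝ), (∀ i, a' i ≠ 0) ∧
      ⋂ j, {x | ⟪a j, x⟫ ≤ b j} = ⋂ i, {x | ⟪a' i, x⟫ ≤ b' i} := by
  obtain ⟨n, ⟨σ⟩⟩ := Finite.exists_equiv_fin J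
  exact ⟨n, a ∘ σ.symm, b ∘ σ.symm, fun i => ha _,
    (σ.symm.surjective.iInter_comp fun j => {x | ⟪a j, x⟫ ≤ b j}).symm⟩

theorem isClosed_iInter_halfSpace {J : Type*} (a : J → E) (b : J → ℝ) :
    IsClosed (⋂ j, {x | ⟪a j, x⟫ ≤ b j}) :=
  isClosed_iInter fun _ => isClosed_le (continuous_const.inner continuous_id) continuous_const

theorem convex_iInter_halfSpace {J : Type*} (a : J → E) (b : J → ℝ) :
    Convex ℝ (⋂ j, {x | ⟪a j, x⟫ ≤ b j}) :=
  convex_iInter fun j => convex_halfSpace_le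
    ⟨fun x y => inner_add_right (a j) x y, fun r x => real_inner_smul_right (a j) x r⟩ _

end InnerProductSpace

section OptClass

variable {d : ℕ} {K : Set (EuclideanSpace ℝ (Fin d))}

theorem mem_optClass_iff {x y : EuclideanSpace ℝ (Fin d)} :
    y ∈ optClass K x ↔ y ∈ K ∧ ∀ z ∈ K, dist x y ≤ dist x z := by
  refine and_congr_right fun hy => ?_
  rw [← Metric.le_infDist ⟨y, hy⟩]
  exact ⟨le_of_eq, fun h => h.antisymm (Metric.infDist_le_dist_of_mem hy)⟩

theorem infDist_sq_le_sum_mul_dist_sq {ι : Type*} [Fintype ι] {w : ι → ℝ}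
    {z : ι → EuclideanSpace ℝ (Fin d)} (hzK : ∀ i, z i ∈ K) (hw : ∀ i, 0 ≤ w i)
    (hw₁ : ∑ i, w i = 1) (x : EuclideanSpace ℝ (Fin d)) :
    Metric.infDist x K ^ 2 ≤ ∑ i, w i * dist x (z i) ^ 2 :=
  calc Metric.infDist x K ^ 2 = ∑ i, w i * Metric.infDist x K ^ 2 := by
        rw [← Finset.sum_mul, hw₁, one_mul]
    _ ≤ ∑ i, w i * dist x (z i) ^ 2 :=
        Finset.sum_le_sum fun i _ => mul_le_mul_of_nonneg_left
          (pow_le_pow_left₀ Metric.infDist_nonneg (Metric.infDist_le_dist_of_mem (hzK i)) 2)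
          (hw i)

theorem forall_mem_optClass_iff_sum_mul_dist_sq_le {ι : Type*} [Fintype ι] {w : ι → ℝ}
    {z : ι → EuclideanSpace ℝ (Fin d)} (hzK : ∀ i, z i ∈ K) (hw : ∀ i, 0 < w i)
    (hw₁ : ∑ i, w i = 1) (x : EuclideanSpace ℝ (Fin d)) :
    (∀ i, z i ∈ optClass K x) ↔ ∑ i, w i * dist x (z i) ^ 2 ≤ Metric.infDist x K ^ 2 := by
  constructor
  · intro hopt
    simp only [fun i => (hopt i).2, ← Finset.sum_mul, hw₁, one_mul, le_refl]
  · intro hle i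
    have hgap : ∀ j ∈ Finset.univ, 0 ≤ w j * (dist x (z j) ^ 2 - Metric.infDist x K ^ 2) :=
      fun j _ => mul_nonneg (hw j).le (sub_nonneg.2
        (pow_le_pow_left₀ Metric.infDist_nonneg (Metric.infDist_le_dist_of_mem (hzK j)) 2))
    have hsum : ∑ j, w j * (dist x (z j) ^ 2 - Metric.infDist x K ^ 2) = 0 := by
      refine le_antisymm ?_ (Finset.sum_nonneg hgap)
      simp only [mul_sub, Finset.sum_sub_distrib, ← Finset.sum_mul, hw₁, one_mul]
      linarith
    have hi := (Finset.sum_eq_zero_iff_of_nonneg hgap).1 hsum i (Finset.mem_univ i)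
    have hsq : dist x (z i) ^ 2 = Metric.infDist x K ^ 2 := by
      simpa [sub_eq_zero, (hw i).ne'] using hi
    exact ⟨hzK i, (pow_left_inj₀ dist_nonneg Metric.infDist_nonneg two_ne_zero).1 hsq⟩

theorem mem_convexHull_optClass_iff {ι : Type*} [Fintype ι] {w : ι → ℝ}
    {z : ι → EuclideanSpace ℝ (Fin d)} {x₀ e : EuclideanSpace ℝ (Fin d)}
    (hz : ∀ i, z i ∈ optClass K x₀) (hw : ∀ i, 0 < w i) (hw₁ : ∑ i, w i = 1)
    (hwz : ∑ i, w i • z i = e) (x : EuclideanSpace ℝ (Fin d)) :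
    e ∈ convexHull ℝ (optClass K x) ↔ ∀ i, z i ∈ optClass K x := by
  constructor
  · intro he
    obtain ⟨κ, _, u, v, hu, -, hv, hv₁, hvu⟩ := eq_pos_convex_span_of_mem_convexHull he
    have hzK : ∀ i, z i ∈ K := fun i => (hz i).1
    have huK : ∀ j, u j ∈ K := fun j => (hu ⟨j, rfl⟩).1
    rw [forall_mem_optClass_iff_sum_mul_dist_sq_le hzK hw hw₁]
    have hz₀ := (forall_mem_optClass_iff_sum_mul_dist_sq_le hzK hw hw₁ x₀).1 hz
    have hux := (forall_mem_optClass_iff_sum_mul_dist_sq_le huK hv hv₁ x).1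
      fun j => hu ⟨j, rfl⟩
    have hu₀ := infDist_sq_le_sum_mul_dist_sq huK (fun j => (hv j).le) hv₁ x₀
    -- the two weighted sums differ by the same constant at `x` and at `x₀`
    linarith [sum_mul_dist_sq_eq hw₁ hwz x, sum_mul_dist_sq_eq hw₁ hwz x₀,
      sum_mul_dist_sq_eq hv₁ hvu x, sum_mul_dist_sq_eq hv₁ hvu x₀]
  · intro hopt
    exact hwz ▸ (convex_convexHull ℝ _).sum_mem (fun i _ => (hw i).le) hw₁
      fun i _ => subset_convexHull ℝ _ (hopt i)

theorem setOf_forall_mem_optClass_eq_iInter {ι : Type*} {z : ι → EuclideanSpace ℝ (Fin d)}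
    (hzK : ∀ i, z i ∈ K) :
    {x | ∀ i, z i ∈ optClass K x} =
      ⋂ p : {p : ι × K // (p.2 : EuclideanSpace ℝ (Fin d)) ≠ z p.1},
        {x | ⟪(2 : ℝ) • ((p.1.2 : EuclideanSpace ℝ (Fin d)) - z p.1.1), x⟫ ≤
          ‖(p.1.2 : EuclideanSpace ℝ (Fin d))‖ ^ 2 - ‖z p.1.1‖ ^ 2} := by
  ext x
  simp only [Set.mem_ofPred_eq, Set.mem_iInter, mem_optClass_iff, hzK, true_and,
    ← dist_le_dist_iff_inner_le]
  refine ⟨fun h p => h _ _ p.1.2.2, fun h i y hy => ?_⟩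
  by_cases hyz : y = z i
  · rw [hyz]
  · exact h ⟨(i, ⟨y, hy⟩), hyz⟩

end OptClass

theorem Peta_isPolyhedron_general {d : ℕ}
    (K : Set (EuclideanSpace ℝ (Fin d))) (hKfin : K.Finite)
    (η : EuclideanSpace ℝ (Fin d) → EuclideanSpace ℝ (Fin d)) (hη : IsEtaMap K η)
    (e : EuclideanSpace ℝ (Fin d)) (he : e ∈ Set.range η) :
    ({x | e ∈ convexHull ℝ (optClass K x)}).Nonempty ∧
      IsClosed {x | e ∈ convexHull ℝ (optClass K x)} ∧
      Convex ℝ {x | e ∈ convexHull ℝ (optClass K x)} ∧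
      ∃ (n : ℕ) (a : Fin n → EuclideanSpace ℝ (Fin d)) (b : Fin n → ℝ),
        (∀ i, a i ≠ 0) ∧
        {x | e ∈ convexHull ℝ (optClass K x)} = ⋂ i, {x | ⟪a i, x⟫ ≤ b i} := by
  obtain ⟨x₀, rfl⟩ := he
  obtain ⟨ι, _, z, w, hz, -, hw, hw₁, hwz⟩ := eq_pos_convex_span_of_mem_convexHull (hη x₀).1
  have hzopt : ∀ i, z i ∈ optClass K x₀ := fun i => hz ⟨i, rfl⟩
  have hP := setOf_forall_mem_optClass_eq_iInter fun i => (hzopt i).1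
  rw [← Set.ext fun x => mem_convexHull_optClass_iff hzopt hw hw₁ hwz x] at hP
  have := hKfin.to_subtype
  obtain ⟨n, a, b, ha, hab⟩ := exists_fin_iInter_halfSpace
    (J := {p : ι × K // (p.2 : EuclideanSpace ℝ (Fin d)) ≠ z p.1}) _ _
    fun p => smul_ne_zero (two_ne_zero (α := ℝ)) (sub_ne_zero.2 p.2)
  refine ⟨⟨x₀, (hη x₀).1⟩, ?_, ?_, n, a, b, ha, hP.trans hab⟩
  · exact hP ▸ isClosed_iInter_halfSpace _ _
  · exact hP ▸ convex_iInter_halfSpace _ _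

/-- For every `e` in the range `𝓔` of `η_K`, the set `P_e = {x : e ∈ conv(opt_K(x))}` is a
polyhedron: a nonempty closed convex set which is a finite intersection of closed half-spaces. -/
theorem Peta_isPolyhedron {d : ℕ} (hd : 1 ≤ d)
    (K : Set (EuclideanSpace ℝ (Fin d))) (hKfin : K.Finite) (hKne : K.Nonempty)
    (η : EuclideanSpace ℝ (Fin d) → EuclideanSpace ℝ (Fin d)) (hη : IsEtaMap K η)
    (e : EuclideanSpace ℝ (Fin d)) (he : e ∈ Set.range η) :
    ({x | e ∈ convexHull ℝ (optClass K x)}).Nonempty ∧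
      IsClosed {x | e ∈ convexHull ℝ (optClass K x)} ∧
      Convex ℝ {x | e ∈ convexHull ℝ (optClass K x)} ∧
      ∃ (n : ℕ) (a : Fin n → EuclideanSpace ℝ (Fin d)) (b : Fin n → ℝ),
        (∀ i, a i ≠ 0) ∧
        {x | e ∈ convexHull ℝ (optClass K x)} = ⋂ i, {x | ⟪a i, x⟫ ≤ b i} :=
  Peta_isPolyhedron_general K hKfin η hη e he
end
end

section
/- Let A, B ⊂ ℝ^d be two polytopes with A ∩ B ≠ ∅. Then there exists a constant M > 0 such that dist_{A ∩ B}(x) ≤ M · dist_B(x) for every x ∈ A. -/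
/-!
Hoffman's error bound. For a cone `C = {ℓᵢ ≤ 0}` cut out by finitely many linear functionals,
`dist(y, C) ≤ M ∑ᵢ (ℓᵢ y)⁺`, by induction on the number of constraints: when a new constraint `L`
is negative somewhere on the old cone `C'`, the nearest point of `C'` is pushed along that
direction into `C`; otherwise `L ≥ 0` on `C'`, so `C = C' ∩ ker L`, and one projects onto `ker L`
and uses the induction hypothesis there. Near a feasible point of an affine system only the active
constraints matter, which gives a local error bound, and compactness of `A` makes it uniform on `A`.
For `x ∈ A` only the constraints of `B` are violated, and their violation is Lipschitz and vanishes
on `B`, hence is at most a multiple of `dist(x, B)`.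
-/

noncomputable section

/-- A polytope in `ℝ^d`: a nonempty bounded set which is a finite intersection of closed
half-spaces `{x : T(x) ≤ 0}` with `T` affine. -/
def IsPolytope {d : ℕ} (P : Set (EuclideanSpace ℝ (Fin d))) : Prop :=
  P.Nonempty ∧ Bornology.IsBounded P ∧
    ∃ (n : ℕ) (T : Fin n → (EuclideanSpace ℝ (Fin d) →ᵃ[ℝ] ℝ)),
      P = ⋂ i, {x | T i x ≤ 0}

open Metric Finset Filter Topology
open scoped NNReal

theorem AffineMap.lipschitzWith_linear {E F : Type*} [NormedAddCommGroup E] [NormedSpace ℝ E]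
    [FiniteDimensional ℝ E] [NormedAddCommGroup F] [NormedSpace ℝ F] (T : E →ᵃ[ℝ] F) :
    LipschitzWith ‖T.linear.toContinuousLinearMap‖₊ T :=
  LipschitzWith.of_dist_le_mul fun x y => by
    rw [dist_eq_norm, dist_eq_norm, ← vsub_eq_sub, ← T.linearMap_vsub]
    exact T.linear.toContinuousLinearMap.le_opNorm (x - y)

theorem LinearMap.exists_forall_apply_sub_smul_eq_zero {K V : Type*} [Field K] [AddCommGroup V]
    [Module K V] (L : V →ₗ[K] K) : ∃ a : V, ∀ y, L (y - L y • a) = 0 := by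
  by_cases hL : L = 0
  · exact ⟨0, by simp [hL]⟩
  · obtain ⟨v, hv⟩ : ∃ v, L v ≠ 0 := by
      by_contra! h
      exact hL (LinearMap.ext h)
    exact ⟨(L v)⁻¹ • v, fun y => by simp [hv]⟩

namespace Hoffman

variable {ι E F : Type*}

section Basic

variable [FunLike F E ℝ] {f : ι → F} {s t : Finset ι} {a : ι} {y : E}

def feasibleSet (f : ι → F) (s : Finset ι) : Set E := {z | ∀ i ∈ s, f i z ≤ 0}

def violation (f : ι → F) (s : Finset ι) (y : E) : ℝ := ∑ i ∈ s, max (f i y) 0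

theorem violation_nonneg : 0 ≤ violation f s y :=
  sum_nonneg fun _ _ => le_max_right _ _

theorem violation_eq_zero_iff : violation f s y = 0 ↔ y ∈ feasibleSet f s := by
  rw [violation, sum_eq_zero_iff_of_nonneg fun _ _ => le_max_right _ _]
  exact forall₂_congr fun _ _ => max_eq_right_iff

theorem violation_mono (h : s ⊆ t) : violation f s y ≤ violation f t y :=
  sum_le_sum_of_subset_of_nonneg h fun _ _ _ => le_max_right _ _

theorem violation_insert [DecidableEq ι] (ha : a ∉ s) :
    violation f (insert a s) y = max (f a y) 0 + violation f s y :=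
  sum_insert ha

theorem feasibleSet_univ [Fintype ι] : feasibleSet f univ = ⋂ i, {z : E | f i z ≤ 0} := by
  ext; simp [feasibleSet]

theorem feasibleSet_sumElim {κ : Type*} [Fintype ι] [Fintype κ] (g : κ → F) :
    feasibleSet (Sum.elim f g) univ = feasibleSet f univ ∩ feasibleSet g (univ : Finset κ) := by
  ext; simp [feasibleSet]

theorem violation_sumElim {κ : Type*} [Fintype ι] [Fintype κ] (g : κ → F) :
    violation (Sum.elim f g) univ y = violation f univ y + violation g univ y :=
  Fintype.sum_sum_type _

theorem isClosed_feasibleSet [TopologicalSpace E] (hf : ∀ i, Continuous (f i)) :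
    IsClosed (feasibleSet f s) := by
  simp only [feasibleSet, Set.ofPred_forall]
  exact isClosed_iInter fun i => isClosed_iInter fun _ => isClosed_le (hf i) continuous_const

theorem continuous_violation [TopologicalSpace E] (hf : ∀ i, Continuous (f i)) :
    Continuous (violation f s) :=
  continuous_finsetSum _ fun i _ => (hf i).max continuous_const

theorem lipschitzWith_violation [PseudoMetricSpace E] {K : ι → ℝ≥0}
    (hf : ∀ i, LipschitzWith (K i) (f i)) : LipschitzWith (∑ i ∈ s, K i) (violation f s) :=
  LipschitzWith.of_le_add_mul _ fun x y => by
    simp only [violation, NNReal.coe_sum, sum_mul, ← sum_add_distrib]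
    exact sum_le_sum fun i _ => ((hf i).max_const 0).le_add_mul x y

theorem violation_le_mul_infDist [PseudoMetricSpace E] [ProperSpace E] {K : ι → ℝ≥0}
    (hf : ∀ i, LipschitzWith (K i) (f i)) (hne : (feasibleSet f s).Nonempty) (x : E) :
    violation f s x ≤ (∑ i ∈ s, K i) * infDist x (feasibleSet f s) := by
  obtain ⟨b, hb, hdist⟩ :=
    (isClosed_feasibleSet fun i => (hf i).continuous).exists_infDist_eq_dist hne x
  simpa [hdist, violation_eq_zero_iff.2 hb] using
    (lipschitzWith_violation (s := s) hf).le_add_mul x b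

end Basic

section ErrorBound

variable [FunLike F E ℝ] [PseudoMetricSpace E] {f : ι → F} {s : Finset ι} {S U : Set E}

def HasErrorBoundOn (f : ι → F) (s : Finset ι) (S : Set E) : Prop :=
  ∃ M, 0 ≤ M ∧ ∀ y ∈ S, infDist y (feasibleSet f s) ≤ M * violation f s y

theorem HasErrorBoundOn.mono (h : HasErrorBoundOn f s S) (hUS : U ⊆ S) : HasErrorBoundOn f s U :=
  let ⟨M, hM, hbound⟩ := h
  ⟨M, hM, fun y hy => hbound y (hUS hy)⟩

theorem HasErrorBoundOn.union (hS : HasErrorBoundOn f s S) (hU : HasErrorBoundOn f s U) :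
    HasErrorBoundOn f s (S ∪ U) := by
  obtain ⟨M, hM, hSb⟩ := hS
  obtain ⟨M', -, hUb⟩ := hU
  refine ⟨max M M', hM.trans (le_max_left _ _), fun y hy => ?_⟩
  rcases hy with hy | hy
  · exact (hSb y hy).trans (mul_le_mul_of_nonneg_right (le_max_left _ _) violation_nonneg)
  · exact (hUb y hy).trans (mul_le_mul_of_nonneg_right (le_max_right _ _) violation_nonneg)

theorem exists_hasErrorBoundOn_nhds_of_notMem (hf : ∀ i, Continuous (f i)) {x : E}
    (hx : x ∉ feasibleSet f s) : ∃ U ∈ 𝓝 x, HasErrorBoundOn f s U := by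
  have hpos : 0 < violation f s x :=
    violation_nonneg.lt_of_ne (Ne.symm (mt violation_eq_zero_iff.1 hx))
  set ratio := fun y => infDist y (feasibleSet f s) / violation f s y
  have hratio : ContinuousAt ratio x :=
    (continuous_infDist_pt _).continuousAt.div (continuous_violation hf).continuousAt hpos.ne'
  refine ⟨_, (continuousAt_const.eventually_lt (continuous_violation hf).continuousAt hpos).and
    (hratio.eventually_lt continuousAt_const (lt_add_one _)), ratio x + 1,
    add_nonneg (div_nonneg infDist_nonneg violation_nonneg) zero_le_one, fun y ⟨hy, hyx⟩ => ?_⟩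
  calc infDist y (feasibleSet f s) = ratio y * violation f s y := (div_mul_cancel₀ _ hy.ne').symm
    _ ≤ (ratio x + 1) * violation f s y := by gcongr

theorem HasErrorBoundOn.exists_mem_dist_le [ProperSpace E] (h : HasErrorBoundOn f s S)
    (hf : ∀ i, Continuous (f i)) (hne : (feasibleSet f s).Nonempty) :
    ∃ M, 0 ≤ M ∧ ∀ y ∈ S, ∃ p ∈ feasibleSet f s, dist y p ≤ M * violation f s y := by
  obtain ⟨M, hM, hbound⟩ := h
  refine ⟨M, hM, fun y hy => ?_⟩
  obtain ⟨p, hp, hdist⟩ := (isClosed_feasibleSet hf).exists_infDist_eq_dist hne y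
  exact ⟨p, hp, hdist ▸ hbound y hy⟩

end ErrorBound

section Cone

variable [NormedAddCommGroup E] [NormedSpace ℝ E] {ℓ : ι → E →L[ℝ] ℝ} {s : Finset ι} {a : ι}

theorem zero_mem_feasibleSet : (0 : E) ∈ feasibleSet ℓ s :=
  fun i _ => by simp

theorem infDist_feasibleSet_insert_eq [DecidableEq ι]
    (hnonneg : ∀ c ∈ feasibleSet ℓ s, 0 ≤ ℓ a c) (z : LinearMap.ker (ℓ a : E →ₗ[ℝ] ℝ)) :
    infDist (z : E) (feasibleSet ℓ (insert a s)) =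
      infDist z
        (feasibleSet (fun i => (ℓ i).comp (LinearMap.ker (ℓ a : E →ₗ[ℝ] ℝ)).subtypeL) s) := by
  rw [← infDist_image (LinearMap.ker (ℓ a : E →ₗ[ℝ] ℝ)).subtypeₗᵢ.isometry]
  congr 1
  ext x
  simp only [feasibleSet, Set.mem_image, Set.mem_ofPred_eq, forall_mem_insert]
  constructor
  · rintro ⟨hxa, hxs⟩
    exact ⟨⟨x, le_antisymm hxa (hnonneg x hxs)⟩, hxs, rfl⟩
  · rintro ⟨⟨x, hx⟩, hxs, rfl⟩
    exact ⟨hx.le, hxs⟩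

variable [FiniteDimensional ℝ E]

theorem hasErrorBoundOn_insert_of_exists_neg [DecidableEq ι] (ha : a ∉ s)
    (hs : HasErrorBoundOn ℓ s Set.univ) {c : E} (hc : c ∈ feasibleSet ℓ s) (hca : ℓ a c < 0) :
    HasErrorBoundOn ℓ (insert a s) Set.univ := by
  have := FiniteDimensional.proper_real E
  obtain ⟨M, hM, hnear⟩ :=
    hs.exists_mem_dist_le (fun i => (ℓ i).continuous) ⟨0, zero_mem_feasibleSet⟩
  set μ := -ℓ a c
  have hμ : 0 < μ := neg_pos.2 hca
  refine ⟨M + (1 + ‖ℓ a‖ * M) / μ * ‖c‖, by positivity, fun y _ => ?_⟩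
  set V := violation ℓ (insert a s) y
  obtain ⟨p, hp, hyp⟩ := hnear y trivial
  have hdist : dist y p ≤ M * V :=
    hyp.trans (mul_le_mul_of_nonneg_left (violation_mono (subset_insert a s)) hM)
  have hLp : max (ℓ a p) 0 ≤ (1 + ‖ℓ a‖ * M) * V :=
    calc max (ℓ a p) 0 ≤ max (ℓ a y) 0 + ‖ℓ a‖ * dist p y :=
          ((ℓ a).lipschitz.max_const 0).le_add_mul p y
      _ ≤ V + ‖ℓ a‖ * (M * V) := by
          rw [dist_comm]
          gcongr
          exact (le_add_of_nonneg_right violation_nonneg).trans_eq (violation_insert ha).symm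
      _ = _ := by ring
  set t := max (ℓ a p) 0 / μ
  have hq : p + t • c ∈ feasibleSet ℓ (insert a s) := by
    intro i hi
    rw [map_add, map_smul, smul_eq_mul]
    rcases mem_insert.1 hi with rfl | hi
    · have : t * ℓ i c = -max (ℓ i p) 0 := by
        rw [← neg_neg (ℓ i c), mul_neg, div_mul_cancel₀ _ hμ.ne']
      linarith [le_max_left (ℓ i p) 0]
    · have ht : 0 ≤ t := by positivity
      linarith [hp i hi, mul_nonpos_of_nonneg_of_nonpos ht (hc i hi)]
  calc infDist y (feasibleSet ℓ (insert a s)) ≤ dist y (p + t • c) := infDist_le_dist_of_mem hq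
    _ ≤ dist y p + dist p (p + t • c) := dist_triangle _ _ _
    _ = dist y p + t * ‖c‖ := by
        rw [dist_self_add_right, norm_smul, Real.norm_of_nonneg (by positivity)]
    _ ≤ M * V + (1 + ‖ℓ a‖ * M) * V / μ * ‖c‖ := by
        gcongr
        exact div_le_div_of_nonneg_right hLp hμ.le
    _ = _ := by ring

theorem exists_abs_apply_le_mul_violation_insert [DecidableEq ι] (ha : a ∉ s)
    (hs : HasErrorBoundOn ℓ s Set.univ) (hnonneg : ∀ c ∈ feasibleSet ℓ s, 0 ≤ ℓ a c) :
    ∃ C, 0 ≤ C ∧ ∀ y, |ℓ a y| ≤ C * violation ℓ (insert a s) y := by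
  have := FiniteDimensional.proper_real E
  obtain ⟨M, hM, hnear⟩ :=
    hs.exists_mem_dist_le (fun i => (ℓ i).continuous) ⟨0, zero_mem_feasibleSet⟩
  refine ⟨1 + ‖ℓ a‖ * M, by positivity, fun y => ?_⟩
  set V := violation ℓ (insert a s) y
  have hV : 0 ≤ V := violation_nonneg
  have hmax : max (ℓ a y) 0 ≤ V :=
    (le_add_of_nonneg_right violation_nonneg).trans_eq (violation_insert ha).symm
  obtain ⟨p, hp, hyp⟩ := hnear y trivial
  have hdist : ‖ℓ a‖ * dist p y ≤ ‖ℓ a‖ * (M * V) := by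
    rw [dist_comm]
    gcongr
    exact hyp.trans (mul_le_mul_of_nonneg_left (violation_mono (subset_insert a s)) hM)
  have hLp := (ℓ a).lipschitz.le_add_mul p y
  rw [coe_nnnorm] at hLp
  have hMV : 0 ≤ ‖ℓ a‖ * (M * V) := by positivity
  rw [abs_le]
  constructor
  · linarith [hnonneg p hp]
  · linarith [le_max_left (ℓ a y) 0]

theorem hasErrorBoundOn_insert_of_nonneg [DecidableEq ι] (ha : a ∉ s)
    (hs : HasErrorBoundOn ℓ s Set.univ)
    (hker : HasErrorBoundOn (fun i => (ℓ i).comp (LinearMap.ker (ℓ a : E →ₗ[ℝ] ℝ)).subtypeL) s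
      Set.univ)
    (hnonneg : ∀ c ∈ feasibleSet ℓ s, 0 ≤ ℓ a c) :
    HasErrorBoundOn ℓ (insert a s) Set.univ := by
  obtain ⟨C, hC, habs⟩ := exists_abs_apply_le_mul_violation_insert ha hs hnonneg
  obtain ⟨M, hM, hbound⟩ := hker
  obtain ⟨u, hu⟩ := (ℓ a : E →ₗ[ℝ] ℝ).exists_forall_apply_sub_smul_eq_zero
  set Λ : ℝ := ∑ i ∈ s, ‖ℓ i‖
  have hΛ : 0 ≤ Λ := by positivity
  refine ⟨M * (1 + Λ * (C * ‖u‖)) + C * ‖u‖, by positivity, fun y _ => ?_⟩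
  set V := violation ℓ (insert a s) y
  have hV : 0 ≤ V := violation_nonneg
  set z : LinearMap.ker (ℓ a : E →ₗ[ℝ] ℝ) := ⟨y - ℓ a y • u, hu y⟩
  have hyz : dist y z ≤ C * ‖u‖ * V := by
    rw [dist_eq_norm, show y - (z : E) = ℓ a y • u by simp [z], norm_smul, Real.norm_eq_abs]
    calc |ℓ a y| * ‖u‖ ≤ C * V * ‖u‖ := by gcongr; exact habs y
      _ = _ := by ring
  have hVz : violation ℓ s (z : E) ≤ V + Λ * (C * ‖u‖ * V) :=
    calc violation ℓ s (z : E) ≤ violation ℓ s y + Λ * dist (z : E) y := by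
          simpa [Λ] using
            (lipschitzWith_violation (s := s) fun i => (ℓ i).lipschitz).le_add_mul z y
      _ ≤ V + Λ * (C * ‖u‖ * V) := by
          rw [dist_comm]
          gcongr
          exact violation_mono (subset_insert a s)
  calc infDist y (feasibleSet ℓ (insert a s))
      ≤ infDist (z : E) (feasibleSet ℓ (insert a s)) + dist y z := infDist_le_infDist_add_dist
    _ ≤ M * violation ℓ s (z : E) + dist y z := by
        rw [infDist_feasibleSet_insert_eq hnonneg]
        gcongr
        exact hbound z trivial
    _ ≤ M * (V + Λ * (C * ‖u‖ * V)) + C * ‖u‖ * V := by gcongr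
    _ = _ := by ring

theorem hasErrorBoundOn_univ_of_linear (ℓ : ι → E →L[ℝ] ℝ) (s : Finset ι) :
    HasErrorBoundOn ℓ s Set.univ := by
  classical
  induction s using Finset.induction_on generalizing E with
  | empty => exact ⟨0, le_rfl, fun y _ => by simp [infDist_zero_of_mem, feasibleSet]⟩
  | insert a s ha ih =>
    by_cases h : ∃ c ∈ feasibleSet ℓ s, ℓ a c < 0
    · obtain ⟨c, hc, hca⟩ := h
      exact hasErrorBoundOn_insert_of_exists_neg ha (ih ℓ) hc hca
    · push Not at h
      exact hasErrorBoundOn_insert_of_nonneg ha (ih ℓ) (ih _) h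

end Cone

section Affine

variable [NormedAddCommGroup E] [NormedSpace ℝ E] [FiniteDimensional ℝ E]

theorem exists_hasErrorBoundOn_nhds_of_mem (T : ι → E →ᵃ[ℝ] ℝ) (s : Finset ι) {p : E}
    (hp : p ∈ feasibleSet T s) : ∃ U ∈ 𝓝 p, HasErrorBoundOn T s U := by
  classical
  have := FiniteDimensional.proper_real E
  set ℓ : ι → E →L[ℝ] ℝ := fun i => (T i).linear.toContinuousLinearMap
  have hT : ∀ i v, T i (p + v) = T i p + ℓ i v := fun i v => by
    rw [add_comm p v, ← vadd_eq_add, (T i).map_vadd, vadd_eq_add, add_comm]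
    rfl
  set active := s.filter fun i => T i p = 0
  obtain ⟨M, hM, hbound⟩ := hasErrorBoundOn_univ_of_linear ℓ active
  obtain ⟨ε, hε, hinactive⟩ : ∃ ε > 0, ∀ w ∈ ball p ε, ∀ i ∈ s, T i p < 0 → T i w ≤ 0 := by
    refine eventually_nhds_iff_ball.1 ((eventually_all_finset s).2 fun i _ => ?_)
    by_cases hi : T i p < 0
    · filter_upwards [(T i).continuous_of_finiteDimensional.continuousAt.eventually_lt
        continuousAt_const hi] with w hw using fun _ => hw.le
    · exact Eventually.of_forall fun _ h => absurd h hi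
  refine ⟨ball p (ε / 2), ball_mem_nhds p (by positivity), M, hM, fun y hy => ?_⟩
  obtain ⟨v, hv, hdist⟩ := (isClosed_feasibleSet (s := active) fun i => (ℓ i).continuous)
    |>.exists_infDist_eq_dist ⟨0, zero_mem_feasibleSet⟩ (y - p)
  have hq_near : p + v ∈ ball p ε := by
    have hyp : ‖y - p‖ < ε / 2 := by rwa [← dist_eq_norm]
    have hvy : dist (y - p) v ≤ ‖y - p‖ := by
      rw [← hdist, ← dist_zero_right]
      exact infDist_le_dist_of_mem zero_mem_feasibleSet
    rw [mem_ball, dist_self_add_left]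
    calc ‖v‖ ≤ ‖y - p‖ + dist (y - p) v := by
          rw [dist_eq_norm']; exact norm_le_insert' v (y - p)
      _ < ε := by linarith
  have hq : p + v ∈ feasibleSet T s := fun i hi => by
    rcases (hp i hi).lt_or_eq with hneg | hzero
    · exact hinactive _ hq_near i hi hneg
    · rw [hT, hzero, zero_add]
      exact hv i (mem_filter.2 ⟨hi, hzero⟩)
  have hviol : violation ℓ active (y - p) = violation T active y :=
    sum_congr rfl fun i hi => by
      have : T i y = ℓ i (y - p) :=
        calc T i y = T i (p + (y - p)) := by rw [add_sub_cancel]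
          _ = ℓ i (y - p) := by rw [hT, (mem_filter.1 hi).2, zero_add]
      rw [this]
  calc infDist y (feasibleSet T s) ≤ dist y (p + v) := infDist_le_dist_of_mem hq
    _ = dist (y - p) v := by rw [dist_eq_norm, dist_eq_norm, sub_sub]
    _ ≤ M * violation T active y := hviol ▸ hdist ▸ hbound _ trivial
    _ ≤ M * violation T s y := by gcongr; exact violation_mono (filter_subset _ _)

theorem hasErrorBoundOn_of_isCompact (T : ι → E →ᵃ[ℝ] ℝ) (s : Finset ι) {K : Set E}
    (hK : IsCompact K) : HasErrorBoundOn T s K := by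
  refine hK.induction_on ⟨0, le_rfl, by simp⟩ (fun _ _ hUS h => h.mono hUS)
    (fun _ _ => HasErrorBoundOn.union) fun x _ => ?_
  obtain ⟨U, hU, h⟩ : ∃ U ∈ 𝓝 x, HasErrorBoundOn T s U := by
    by_cases hx : x ∈ feasibleSet T s
    · exact exists_hasErrorBoundOn_nhds_of_mem T s hx
    · exact exists_hasErrorBoundOn_nhds_of_notMem
        (fun i => (T i).continuous_of_finiteDimensional) hx
  exact ⟨U, mem_nhdsWithin_of_mem_nhds hU, h⟩

end Affine

end Hoffman

open Hoffman

theorem dist_inter_polytopes_general {d : ℕ} (A B : Set (EuclideanSpace ℝ (Fin d)))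
    (hA : IsPolytope A) (hB : IsPolytope B) :
    ∃ M : ℝ, 0 < M ∧ ∀ x ∈ A, Metric.infDist x (A ∩ B) ≤ M * Metric.infDist x B := by
  obtain ⟨-, hAbd, m, S, rfl⟩ := hA
  obtain ⟨hBne, -, n, T, rfl⟩ := hB
  simp only [← feasibleSet_univ] at hAbd hBne ⊢
  obtain ⟨M, hM, hbound⟩ :=
    hasErrorBoundOn_of_isCompact (Sum.elim S T) univ hAbd.isCompact_closure
  obtain ⟨K, hK⟩ : ∃ K : ℝ≥0, ∀ x, violation T univ x ≤ K * infDist x (feasibleSet T univ) :=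
    ⟨_, violation_le_mul_infDist (fun i => (T i).lipschitzWith_linear) hBne⟩
  refine ⟨M * K + 1, by positivity, fun x hx => ?_⟩
  calc infDist x (feasibleSet S univ ∩ feasibleSet T univ)
      ≤ M * violation (Sum.elim S T) univ x := by
        rw [← feasibleSet_sumElim]
        exact hbound x (subset_closure hx)
    _ = M * violation T univ x := by
        rw [violation_sumElim, violation_eq_zero_iff.2 hx, zero_add]
    _ ≤ M * (K * infDist x (feasibleSet T univ)) := by gcongr; exact hK x
    _ ≤ (M * K + 1) * infDist x (feasibleSet T univ) := by
        nlinarith [infDist_nonneg (x := x) (s := feasibleSet T univ)]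

/-- Reciprocal distance of intersecting polytopes: if `A ∩ B ≠ ∅` then there is `M > 0` with
`dist_{A ∩ B}(x) ≤ M dist_B(x)` for all `x ∈ A`. -/
theorem dist_inter_polytopes {d : ℕ} (A B : Set (EuclideanSpace ℝ (Fin d)))
    (hA : IsPolytope A) (hB : IsPolytope B) (hAB : (A ∩ B).Nonempty) :
    ∃ M : ℝ, 0 < M ∧ ∀ x ∈ A, Metric.infDist x (A ∩ B) ≤ M * Metric.infDist x B :=
  dist_inter_polytopes_general A B hA hB
end
end

section
/- Let P ⊂ ℝ^d be a polytope with a representation P = ⋂_{j=1}^ℓ {x ∈ ℝ^d : T_j(x) ≤ 0}, where each T_j : ℝ^d → ℝ is affine with Lipschitz constant 1. Then there exists a constant c_P > 0 such that for every x ∈ ℝ^d and every j ∈ {1, …, ℓ}: T_j(x)⁺ ≤ dist_P(x) and dist_P(x) ≤ c_P · Σ_{j=1}^ℓ T_j(x)⁺. -/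
/-!
Pick `z ∈ P` at which every constraint that does not vanish identically on `P` is strictly
negative, with slack `T j z ≤ -r`. The linear parts `φ j` of the constraints that do vanish on `P`
satisfy `(∀ j, φ j v ≤ 0) → ∀ j, φ j v = 0` (otherwise `z + ε v` would leave their zero set
inside `P`), so by compactness of the unit sphere in the orthogonal complement of their common
kernel, `x` lies within `C ∑ (T j x)⁺` of a point `p` where all of them vanish. Moving `p` towards
`z` by the fraction `s / (s + r)`, `s = ∑ (T j p)⁺`, lands in `P` at a cost of at most
`diam P / r * s`, and `s ≤ ∑ (T j x)⁺ + ℓ · dist x p`.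
-/

open Metric Set Filter Topology

section Lipschitz

variable {α ι : Type*} [PseudoMetricSpace α]

lemma LipschitzWith.max_zero_le_infDist {f : α → ℝ} (hf : LipschitzWith 1 f) {s : Set α}
    (hs : s.Nonempty) (hfs : ∀ y ∈ s, f y ≤ 0) (x : α) : max (f x) 0 ≤ infDist x s := by
  refine max_le ((le_infDist hs).2 fun y hy => ?_) infDist_nonneg
  have := hf.le_add_mul x y
  simp only [NNReal.coe_one, one_mul] at this
  linarith [hfs y hy]

lemma sum_max_zero_le_add_card_mul_dist [Fintype ι] {f : ι → α → ℝ}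
    (hf : ∀ j, LipschitzWith 1 (f j)) (x y : α) :
    ∑ j, max (f j x) 0 ≤ ∑ j, max (f j y) 0 + Fintype.card ι * dist x y := by
  have h : ∀ j, max (f j x) 0 ≤ max (f j y) 0 + dist x y := fun j => by
    simpa using ((hf j).max_const 0).le_add_mul x y
  calc ∑ j, max (f j x) 0 ≤ ∑ j, (max (f j y) 0 + dist x y) := Finset.sum_le_sum fun j _ => h j
    _ = ∑ j, max (f j y) 0 + Fintype.card ι * dist x y := by simp [Finset.sum_add_distrib]

end Lipschitz

lemma exists_pos_forall_le_neg_of_neg {ι : Type*} [Finite ι] (a : ι → ℝ) :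
    ∃ r > 0, ∀ j, a j < 0 → a j ≤ -r := by
  have : ∀ᶠ r in 𝓝[>] (0 : ℝ), ∀ j, a j < 0 → a j ≤ -r := eventually_all.2 fun j => by
    by_cases h : a j < 0
    · filter_upwards [nhdsWithin_le_nhds (eventually_lt_nhds (neg_pos.2 h))] with r hr _
      linarith
    · exact Eventually.of_forall fun _ h' => absurd h' h
  obtain ⟨r, hr, hr0⟩ := (this.and self_mem_nhdsWithin).exists
  exact ⟨r, hr0, hr⟩

lemma exists_mem_forall_neg_of_convexOn {E ι : Type*} [AddCommGroup E] [Module ℝ E] [Fintype ι]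
    {P : Set E} {f : ι → E → ℝ} (hP : Convex ℝ P) (hne : P.Nonempty)
    (hf : ∀ j, ConvexOn ℝ P (f j)) (hle : ∀ j, ∀ p ∈ P, f j p ≤ 0) :
    ∃ z ∈ P, ∀ j, (∃ p ∈ P, f j p < 0) → f j z < 0 := by
  rcases isEmpty_or_nonempty ι with hι | hι
  · exact ⟨hne.some, hne.some_mem, fun j => isEmptyElim j⟩
  have hwit : ∀ j, ∃ p ∈ P, (∃ q ∈ P, f j q < 0) → f j p < 0 := fun j => by
    by_cases h : ∃ q ∈ P, f j q < 0
    · obtain ⟨q, hq, hlt⟩ := h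
      exact ⟨q, hq, fun _ => hlt⟩
    · exact ⟨hne.some, hne.some_mem, fun h' => absurd h' h⟩
  choose w hwP hw using hwit
  have hone : ∀ j ∈ (Finset.univ : Finset ι), (0 : ℝ) ≤ (fun _ => 1) j := fun _ _ => zero_le_one
  have hsum : 0 < ∑ _j : ι, (1 : ℝ) := by simpa using Fintype.card_pos
  refine ⟨Finset.univ.centerMass (fun _ => 1) w, hP.centerMass_mem hone hsum fun j _ => hwP j,
    fun j hj => ((hf j).map_centerMass_le hone hsum fun k _ => hwP k).trans_lt ?_⟩
  have hneg : ∑ k, f j (w k) < ∑ _k : ι, (0 : ℝ) :=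
    Finset.sum_lt_sum (fun k _ => hle j _ (hwP k)) ⟨j, Finset.mem_univ j, hw j hj⟩
  simp only [Finset.centerMass, Function.comp_apply, smul_eq_mul, one_mul,
    Finset.sum_const_zero] at hneg ⊢
  exact mul_neg_of_pos_of_neg (inv_pos.2 hsum) hneg

section Hoffman

variable {E ι : Type*} [NormedAddCommGroup E] [InnerProductSpace ℝ E] [FiniteDimensional ℝ E]
  [Fintype ι]

lemma exists_pos_mul_norm_le_sum_max_zero (φ : ι → E →ₗ[ℝ] ℝ)
    (hφ : ∀ v, (∀ j, φ j v ≤ 0) → ∀ j, φ j v = 0) :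
    ∃ m > 0, ∀ u ∈ (⨅ j, LinearMap.ker (φ j))ᗮ, m * ‖u‖ ≤ ∑ j, max (φ j u) 0 := by
  set W := ⨅ j, LinearMap.ker (φ j)
  set g : E → ℝ := fun u => ∑ j, max (φ j u) 0 with hg
  have hg_smul : ∀ (u : E) {t : ℝ}, 0 ≤ t → g (t • u) = t * g u := fun u t ht => by
    simp only [hg, map_smul, smul_eq_mul, Finset.mul_sum, mul_max_of_nonneg _ _ ht, mul_zero]
  have hg_pos : ∀ u ∈ (Wᗮ : Set E) ∩ sphere 0 1, 0 < g u := by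
    rintro u ⟨huW, hu1⟩
    refine (Finset.sum_nonneg fun j _ => le_max_right _ _).lt_of_ne fun hg0 => ?_
    have hle : ∀ j, φ j u ≤ 0 := fun j => max_eq_right_iff.1 <|
      (Finset.sum_eq_zero_iff_of_nonneg fun k _ => le_max_right _ _).1 hg0.symm j
        (Finset.mem_univ j)
    have huW' : u ∈ W := Submodule.mem_iInf _ |>.2 fun j => hφ u hle j
    have hu0 : u ∈ W ⊓ Wᗮ := Submodule.mem_inf.2 ⟨huW', huW⟩
    rw [W.inf_orthogonal_eq_bot, Submodule.mem_bot] at hu0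
    simp [hu0] at hu1
  have hcont : Continuous g := by
    have := fun j => (φ j).continuous_of_finiteDimensional
    fun_prop
  obtain ⟨m, hm, hmg⟩ := ((isCompact_sphere 0 1).inter_left
    W.isClosed_orthogonal).exists_forall_le' hcont.continuousOn hg_pos
  refine ⟨m, hm, fun u hu => ?_⟩
  rcases eq_or_ne u 0 with rfl | hu0
  · simp
  have hunit := hmg (‖u‖⁻¹ • u) ⟨Wᗮ.smul_mem _ hu, by simp [norm_smul, hu0]⟩
  rw [hg_smul u (by positivity), le_inv_mul_iff₀ (norm_pos_iff.2 hu0)] at hunit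
  linarith

lemma exists_pos_norm_sub_le_sum_max_zero (φ : ι → E →ₗ[ℝ] ℝ)
    (hφ : ∀ v, (∀ j, φ j v ≤ 0) → ∀ j, φ j v = 0) :
    ∃ C > 0, ∀ v, ∃ w, (∀ j, φ j w = 0) ∧ ‖v - w‖ ≤ C * ∑ j, max (φ j v) 0 := by
  obtain ⟨m, hm, hmg⟩ := exists_pos_mul_norm_le_sum_max_zero φ hφ
  set W := ⨅ j, LinearMap.ker (φ j)
  have hw : ∀ v j, φ j (W.starProjection v) = 0 := fun v j =>
    (Submodule.mem_iInf _).1 (W.starProjection_apply_mem v) j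
  refine ⟨m⁻¹, inv_pos.2 hm, fun v => ⟨W.starProjection v, hw v, ?_⟩⟩
  have := hmg _ (W.sub_starProjection_mem_orthogonal v)
  simp only [map_sub, hw, sub_zero] at this
  rwa [inv_mul_eq_div, le_div_iff₀' hm]

end Hoffman

section Polyhedron

variable {E ι : Type*} [Fintype ι]

section Module

variable [AddCommGroup E] [Module ℝ E] {T : ι → E →ᵃ[ℝ] ℝ}

lemma exists_pos_smul_add_mem_iInter {z v : E} (hz : z ∈ ⋂ j, {x | T j x ≤ 0})
    (hv : ∀ j, T j z = 0 → (T j).linear v ≤ 0) :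
    ∃ ε : ℝ, 0 < ε ∧ ε • v + z ∈ ⋂ j, {x | T j x ≤ 0} := by
  have : ∀ᶠ ε in 𝓝[>] (0 : ℝ), ∀ j, (T j).linear (ε • v) + T j z ≤ 0 :=
    eventually_all.2 fun j => by
      simp only [map_smul, smul_eq_mul]
      have hzj : T j z ≤ 0 := mem_iInter.1 hz j
      rcases hzj.lt_or_eq with h | h
      · have hlim : Tendsto (fun ε : ℝ => ε * (T j).linear v + T j z) (𝓝 0) (𝓝 (T j z)) := by
          have hc : Continuous fun ε : ℝ => ε * (T j).linear v + T j z := by fun_prop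
          simpa using hc.tendsto 0
        exact nhdsWithin_le_nhds (hlim.eventually (eventually_lt_nhds h |>.mono fun _ h => h.le))
      · filter_upwards [self_mem_nhdsWithin] with ε hε
        rw [h, add_zero]
        exact mul_nonpos_of_nonneg_of_nonpos (le_of_lt hε) (hv j h)
  obtain ⟨ε, hε, hε0⟩ := (this.and self_mem_nhdsWithin).exists
  refine ⟨ε, hε0, mem_iInter.2 fun j => ?_⟩
  change T j (ε • v +ᵥ z) ≤ 0
  rw [(T j).map_vadd]
  exact hε j

lemma linear_apply_eq_zero_of_forall_neg {z v : E} (hz : z ∈ ⋂ j, {x | T j x ≤ 0})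
    (hrel : ∀ j, (∃ p ∈ ⋂ j, {x | T j x ≤ 0}, T j p < 0) → T j z < 0)
    (hv : ∀ j, T j z = 0 → (T j).linear v ≤ 0) {j : ι} (hj : T j z = 0) :
    (T j).linear v = 0 := by
  obtain ⟨ε, hε, hmem⟩ := exists_pos_smul_add_mem_iInter hz hv
  have hTj : T j (ε • v +ᵥ z) = ε * (T j).linear v := by
    rw [(T j).map_vadd, map_smul, hj, vadd_eq_add, add_zero, smul_eq_mul]
  have hzero : T j (ε • v +ᵥ z) = 0 :=
    (mem_iInter.1 hmem j).eq_or_lt.resolve_right fun hlt => (hrel j ⟨_, hmem, hlt⟩).ne hj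
  exact (mul_eq_zero.1 (hTj ▸ hzero)).resolve_left hε.ne'

end Module

section Normed

variable [NormedAddCommGroup E] [NormedSpace ℝ E] {T : ι → E →ᵃ[ℝ] ℝ}

lemma infDist_iInter_le_of_slater {z y : E} (hz : z ∈ ⋂ j, {x | T j x ≤ 0})
    (hbd : Bornology.IsBounded (⋂ j, {x | T j x ≤ 0})) {r : ℝ} (hr : 0 < r)
    (hyz : ∀ j, T j y ≤ 0 ∨ T j z ≤ -r) :
    infDist y (⋂ j, {x | T j x ≤ 0}) ≤
      diam (⋂ j, {x | T j x ≤ 0}) / r * ∑ j, max (T j y) 0 := by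
  set P := ⋂ j, {x | T j x ≤ 0}
  set s := ∑ j, max (T j y) 0
  have hTs : ∀ j, T j y ≤ s := fun j => (le_max_left _ _).trans
    (Finset.single_le_sum (fun k _ => le_max_right (T k y) 0) (Finset.mem_univ j))
  set θ := s / (s + r)
  have hθ0 : 0 ≤ θ := by positivity
  have hθ1 : 0 ≤ 1 - θ := sub_nonneg.2 (div_le_one_of_le₀ (by linarith) (by positivity))
  have hθr : θ * r = (1 - θ) * s := by
    have : θ * (s + r) = s := div_mul_cancel₀ _ (by positivity)
    linarith
  clear_value θ
  set y' := AffineMap.lineMap y z θ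
  have hy' : y' ∈ P := mem_iInter.2 fun j => by
    change T j y' ≤ 0
    rw [AffineMap.apply_lineMap, AffineMap.lineMap_apply_module, smul_eq_mul, smul_eq_mul]
    have hzj : T j z ≤ 0 := mem_iInter.1 hz j
    rcases hyz j with h | h
    · nlinarith [mul_nonpos_of_nonneg_of_nonpos hθ1 h, mul_nonpos_of_nonneg_of_nonpos hθ0 hzj]
    · nlinarith [mul_le_mul_of_nonneg_left (hTs j) hθ1, mul_le_mul_of_nonneg_left h hθ0]
  calc infDist y P ≤ dist y y' := infDist_le_dist_of_mem hy'
    _ = θ * dist y z := by rw [dist_left_lineMap, Real.norm_of_nonneg hθ0]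
    _ = s / r * ((1 - θ) * dist y z) := by
      rw [div_mul_eq_mul_div, eq_div_iff hr.ne']
      linear_combination dist y z * hθr
    _ = s / r * dist y' z := by rw [dist_lineMap_right, Real.norm_of_nonneg hθ1]
    _ ≤ s / r * diam P := by gcongr; exact dist_le_diam_of_mem hbd hy' hz
    _ = diam P / r * s := by ring

end Normed

section InnerProduct

variable [NormedAddCommGroup E] [InnerProductSpace ℝ E] [FiniteDimensional ℝ E]
  {T : ι → E →ᵃ[ℝ] ℝ}

lemma exists_pos_forall_exists_dist_le_sum_max_zero {z : E} (hz : z ∈ ⋂ j, {x | T j x ≤ 0})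
    (hrel : ∀ j, (∃ p ∈ ⋂ j, {x | T j x ≤ 0}, T j p < 0) → T j z < 0) :
    ∃ C > 0, ∀ x, ∃ p, (∀ j, T j z = 0 → T j p = 0) ∧ dist x p ≤ C * ∑ j, max (T j x) 0 := by
  let φ : ι → E →ₗ[ℝ] ℝ := fun j => if T j z = 0 then (T j).linear else 0
  obtain ⟨C, hC, hproj⟩ := exists_pos_norm_sub_le_sum_max_zero φ fun v hv j => by
    by_cases hj : T j z = 0
    · simpa [φ, hj] using linear_apply_eq_zero_of_forall_neg hz hrel
        (fun k hk => by simpa [φ, hk] using hv k) hj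
    · simp [φ, hj]
  refine ⟨C, hC, fun x => ?_⟩
  obtain ⟨w, hw, hxw⟩ := hproj (x - z)
  refine ⟨w +ᵥ z, fun j hj => ?_, ?_⟩
  · have hwj := hw j
    simp only [φ, hj, if_true] at hwj
    rw [(T j).map_vadd, hwj, hj, vadd_eq_add, add_zero]
  have hφx : ∀ j, max (φ j (x - z)) 0 ≤ max (T j x) 0 := fun j => by
    by_cases hj : T j z = 0
    · simp only [φ, hj, if_true]
      rw [← vsub_eq_sub, (T j).linearMap_vsub, hj, vsub_eq_sub, sub_zero]
    · simp [φ, hj]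
  calc dist x (w +ᵥ z) = ‖x - z - w‖ := by rw [dist_eq_norm, sub_sub, add_comm z w]; rfl
    _ ≤ C * ∑ j, max (φ j (x - z)) 0 := hxw
    _ ≤ C * ∑ j, max (T j x) 0 :=
      mul_le_mul_of_nonneg_left (Finset.sum_le_sum fun j _ => hφx j) hC.le

end InnerProduct

end Polyhedron

/-- For a polytope `P = ⋂_{j=1}^ℓ {T_j ≤ 0}` represented by `1`-Lipschitz affine functions
`T_j`, there is a constant `c_P > 0` such that `T_j(x)⁺ ≤ dist_P(x)` for every `j`, and
`dist_P(x) ≤ c_P ∑_j T_j(x)⁺`, for every `x ∈ ℝ^d`. -/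
theorem polytope_dist_estimates {d ℓ : ℕ} (P : Set (EuclideanSpace ℝ (Fin d)))
    (hPne : P.Nonempty) (hPbd : Bornology.IsBounded P)
    (T : Fin ℓ → (EuclideanSpace ℝ (Fin d) →ᵃ[ℝ] ℝ))
    (hlip : ∀ j, LipschitzWith 1 (T j))
    (hrep : P = ⋂ j, {x | T j x ≤ 0}) :
    ∃ c : ℝ, 0 < c ∧ ∀ x : EuclideanSpace ℝ (Fin d),
      (∀ j, max (T j x) 0 ≤ Metric.infDist x P) ∧
      Metric.infDist x P ≤ c * ∑ j, max (T j x) 0 := by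
  subst hrep
  have hPconv : Convex ℝ (⋂ j, {x | T j x ≤ 0}) :=
    convex_iInter fun j => (convex_Iic 0).affine_preimage (T j)
  obtain ⟨z, hzP, hrel⟩ := exists_mem_forall_neg_of_convexOn hPconv hPne
    (fun j => ((convexOn_id convex_univ).comp_affineMap (T j)).subset (subset_univ _) hPconv)
    (fun j _ hp => mem_iInter.1 hp j)
  obtain ⟨r, hr, hzr⟩ := exists_pos_forall_le_neg_of_neg fun j => T j z
  obtain ⟨C, hC, hhull⟩ := exists_pos_forall_exists_dist_le_sum_max_zero hzP hrel
  set D := diam (⋂ j, {x | T j x ≤ 0})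
  refine ⟨C + D / r * (1 + ℓ * C), by positivity, fun x =>
    ⟨fun j => (hlip j).max_zero_le_infDist hPne (fun y hy => mem_iInter.1 hy j) x, ?_⟩⟩
  obtain ⟨p, hpz, hxp⟩ := hhull x
  have hp : ∀ j, T j p ≤ 0 ∨ T j z ≤ -r := fun j =>
    (mem_iInter.1 hzP j).eq_or_lt.imp (fun h => (hpz j h).le) (hzr j)
  have hDℓ : 0 ≤ D / r * ℓ := by positivity
  calc infDist x _ ≤ infDist p _ + dist x p := infDist_le_infDist_add_dist
    _ ≤ D / r * ∑ j, max (T j p) 0 + dist x p := by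
      gcongr; exact infDist_iInter_le_of_slater hzP hPbd hr hp
    _ ≤ D / r * (∑ j, max (T j x) 0 + ℓ * dist p x) + dist x p := by
      gcongr
      simpa using sum_max_zero_le_add_card_mul_dist hlip p x
    _ ≤ (C + D / r * (1 + ℓ * C)) * ∑ j, max (T j x) 0 := by
      rw [dist_comm]
      linarith [mul_le_mul_of_nonneg_left hxp hDℓ]
end
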